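/- Let y = (y_1,…,y_e) ∈ ℤ^e and let j ∈ {1,…,e}. Suppose y_{j+1} > y_j + δ_{j,e}, where the index j+1 is read as 1 when j = e (so the hypothesis reads y_1 > y_e + 1 when j = e). Let y′ := s_j·y. If σ is the stable sorting permutation of y, then s̄_j ∘ σ is the stable sorting permutation of y′; i.e., σ_{s_j·y} = s̄_j σ_y. -/
import Mathlib


/-- `σ` is the stable sorting permutation of `y`: `y_{σ(j)} ≤ y_{σ(j+1)}` for all `j`,
with equality only if `σ(j) < σ(j+1)`.  (Such a permutation is unique.) -/
def IsStableSorting (e : ℕ) (y : Fin e → ℤ) (σ : Equiv.Perm (Fin e)) : Prop :=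
  ∀ (j : ℕ) (hj : j + 1 < e),
    y (σ ⟨j, by omega⟩) ≤ y (σ ⟨j + 1, hj⟩) ∧
      (y (σ ⟨j, by omega⟩) = y (σ ⟨j + 1, hj⟩) → σ ⟨j, by omega⟩ < σ ⟨j + 1, hj⟩)

/-- An adjacent transposition preserves strict order unless applied to exactly the
adjacent pair. -/
lemma aux_adj_swap (e : ℕ) (a b u v : Fin e) (hab : (b : ℕ) = (a : ℕ) + 1)
    (huv : u < v) (hne : u ≠ a ∨ v ≠ b) :
    Equiv.swap a b u < Equiv.swap a b v := by
  rw [Equiv.swap_apply_def, Equiv.swap_apply_def]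
  rcases hne with h | h <;>
    (split_ifs <;> simp only [Fin.lt_def, Fin.ext_iff] at * <;> omega)

lemma aux_cyc (e : ℕ) (he2 : 2 ≤ e) (y : Fin e → ℤ) (a0 a1 : Fin e)
    (h0 : (a0 : ℕ) = 0) (h1 : (a1 : ℕ) = e - 1)
    (hyy : y a1 + 1 < y a0) (u v : Fin e) (hne : u ≠ v)
    (hle : y u ≤ y v) (heq : y u = y v → u < v) :
    Function.update (Function.update y a0 (y a1 + 1)) a1 (y a0 - 1) (Equiv.swap a0 a1 u) ≤
      Function.update (Function.update y a0 (y a1 + 1)) a1 (y a0 - 1) (Equiv.swap a0 a1 v) ∧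
      (Function.update (Function.update y a0 (y a1 + 1)) a1 (y a0 - 1) (Equiv.swap a0 a1 u) =
        Function.update (Function.update y a0 (y a1 + 1)) a1 (y a0 - 1) (Equiv.swap a0 a1 v) →
        Equiv.swap a0 a1 u < Equiv.swap a0 a1 v) := by
  have ha01 : a0 ≠ a1 := fun h => by simp [Fin.ext_iff, h0, h1] at h; omega
  have hf : ∀ t : Fin e,
      Function.update (Function.update y a0 (y a1 + 1)) a1 (y a0 - 1) (Equiv.swap a0 a1 t)
        = if t = a0 then y a0 - 1 else if t = a1 then y a1 + 1 else y t := by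
    intro t
    rcases eq_or_ne t a0 with hh0 | hh0
    · rw [if_pos hh0, hh0, Equiv.swap_apply_left, Function.update_self]
    · rcases eq_or_ne t a1 with hh1 | hh1
      · rw [if_neg hh0, if_pos hh1, hh1, Equiv.swap_apply_right,
          Function.update_of_ne ha01, Function.update_self]
      · rw [if_neg hh0, if_neg hh1, Equiv.swap_apply_of_ne_of_ne hh0 hh1,
          Function.update_of_ne hh1, Function.update_of_ne hh0]
  rw [hf u, hf v]
  have hmax : ∀ t : Fin e, t ≠ a1 → t < a1 := by
    intro t ht
    have h' : (t : ℕ) ≠ (a1 : ℕ) := fun h => ht (Fin.ext h)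
    have := t.isLt
    exact Fin.lt_def.mpr (by omega)
  have hmin : ∀ t : Fin e, t ≠ a0 → a0 < t := by
    intro t ht
    have h' : (t : ℕ) ≠ (a0 : ℕ) := fun h => ht (Fin.ext h)
    exact Fin.lt_def.mpr (by omega)
  by_cases e0 : u = a0 <;> by_cases e1 : u = a1 <;>
    by_cases e2 : v = a0 <;> by_cases e3 : v = a1
  all_goals first
    | (exact absurd (e0.symm.trans e1) ha01)
    | (exact absurd (e2.symm.trans e3) ha01)
    | (exact absurd (e0.trans e2.symm) hne)
    | (exact absurd (e1.trans e3.symm) hne)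
    | skip
  · -- u = a0, v = a1 : impossible since y a0 > y a1
    exfalso
    rw [e0, e3] at hle
    linarith
  · -- u = a0, v generic
    simp only [if_pos e0, if_neg e2, if_neg e3]
    rw [e0] at hle
    exact ⟨by linarith, fun h => by exfalso; linarith⟩
  · -- u = a1, v = a0
    simp only [if_pos e1, if_pos e2, if_neg e0, if_neg e3]
    refine ⟨by linarith, fun h => ?_⟩
    rw [e1, e2, Equiv.swap_apply_right, Equiv.swap_apply_left]
    exact hmin a1 ha01.symm
  · -- u = a1, v generic
    simp only [if_pos e1, if_neg e0, if_neg e2, if_neg e3]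
    rw [e1] at hle heq
    have hlt' : y a1 + 1 ≤ y v := by
      rcases lt_or_eq_of_le hle with h | h
      · linarith
      · exact absurd (heq h) (not_lt.mpr (le_of_lt (hmax _ e3)))
    refine ⟨hlt', fun h => ?_⟩
    rw [e1, Equiv.swap_apply_right, Equiv.swap_apply_of_ne_of_ne e2 e3]
    exact hmin _ e2
  · -- u generic, v = a0
    simp only [if_pos e2, if_neg e0, if_neg e1, if_neg e3]
    rw [e2] at hle heq
    have hlt' : y u ≤ y a0 - 1 := by
      rcases lt_or_eq_of_le hle with h | h
      · linarith
      · exact absurd (heq h) (not_lt.mpr (le_of_lt (hmin _ e0)))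
    refine ⟨hlt', fun h => ?_⟩
    rw [e2, Equiv.swap_apply_left, Equiv.swap_apply_of_ne_of_ne e0 e1]
    exact hmax _ e1
  · -- u generic, v = a1
    simp only [if_pos e3, if_neg e0, if_neg e1, if_neg e2]
    rw [e3] at hle
    exact ⟨by linarith, fun h => by exfalso; linarith⟩
  · -- both generic
    simp only [if_neg e0, if_neg e1, if_neg e2, if_neg e3]
    refine ⟨hle, fun h => ?_⟩
    rw [Equiv.swap_apply_of_ne_of_ne e0 e1, Equiv.swap_apply_of_ne_of_ne e2 e3]
    exact heq h

/-- If `y_{j+1} > y_j + δ_{j,e}` (indices mod `e`, with `s_e·y = (y_e+1,y_2,…,y_{e−1},y_1−1)`)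
and `σ` is the stable sorting permutation of `y`, then `s̄_j ∘ σ` is the stable sorting
permutation of `s_j·y`. -/
theorem stableSorting_sAct (e : ℕ) (he : 1 ≤ e) (y y' : Fin e → ℤ) (j : ℕ)
    (hj1 : 1 ≤ j) (hj2 : j ≤ e) (sbar : Equiv.Perm (Fin e))
    (hy'lt : ∀ hlt : j < e, y' = fun x => y (Equiv.swap ⟨j - 1, by omega⟩ ⟨j, hlt⟩ x))
    (hy'e : j = e →
      y' = Function.update (Function.update y ⟨0, by omega⟩ (y ⟨e - 1, by omega⟩ + 1))
        ⟨e - 1, by omega⟩ (y ⟨0, by omega⟩ - 1))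
    (hsbarlt : ∀ hlt : j < e, sbar = Equiv.swap ⟨j - 1, by omega⟩ ⟨j, hlt⟩)
    (hsbare : j = e → sbar = Equiv.swap ⟨0, by omega⟩ ⟨e - 1, by omega⟩)
    (hylt : ∀ hlt : j < e, y ⟨j - 1, by omega⟩ < y ⟨j, hlt⟩)
    (hye : j = e → y ⟨e - 1, by omega⟩ + 1 < y ⟨0, by omega⟩)
    (σ : Equiv.Perm (Fin e)) (hσ : IsStableSorting e y σ) :
    IsStableSorting e y' (sbar * σ) := by
  intro j' hj'
  obtain ⟨h1, h2⟩ := hσ j' hj'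
  set k : Fin e := ⟨j', by omega⟩ with hk
  set k' : Fin e := ⟨j' + 1, hj'⟩ with hk'
  have hne : σ k ≠ σ k' := by
    intro h
    have := σ.injective h
    simp [hk, hk', Fin.ext_iff] at this
  rcases lt_or_eq_of_le hj2 with hlt | heqj
  · -- case j < e
    have hy' := hy'lt hlt
    have hs := hsbarlt hlt
    subst hy' hs
    simp only [Equiv.Perm.mul_apply, Equiv.swap_apply_self]
    refine ⟨h1, fun heqy => ?_⟩
    have hor : σ k ≠ ⟨j - 1, by omega⟩ ∨ σ k' ≠ ⟨j, hlt⟩ := by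
      by_contra h
      push_neg at h
      obtain ⟨ea, eb⟩ := h
      rw [ea, eb] at heqy
      exact absurd heqy (ne_of_lt (hylt hlt))
    exact aux_adj_swap e ⟨j - 1, by omega⟩ ⟨j, hlt⟩ (σ k) (σ k') (by simp; omega)
      (h2 heqy) hor
  · -- case j = e
    have hyy := hye heqj
    have he2 : 2 ≤ e := by
      by_contra h
      have h1e : e = 1 := by omega
      have hE : y (⟨e - 1, by omega⟩ : Fin e) = y ⟨0, by omega⟩ :=
        congrArg y (Fin.ext (by omega))
      rw [hE] at hyy
      omega
    have hy' := hy'e heqj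
    have hs := hsbare heqj
    subst hy' hs
    simp only [Equiv.Perm.mul_apply]
    exact aux_cyc e he2 y ⟨0, by omega⟩ ⟨e - 1, by omega⟩ rfl rfl hyy
      (σ k) (σ k') hne h1 h2
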